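/- arXiv:2202.09585 — 4 statements merged into one kernel-verified Lean document; each statement's English description precedes it below -/
import Mathlib

section
/- Andréief–Heine identity: Let (D, μ) be a measure space, N ≥ 1 an integer, and f_1,…,f_N, g_1,…,g_N : D → ℂ measurable functions such that f_i·g_j is μ-integrable for all i,j and the function (x_1,…,x_N) ↦ det_{1≤i,j≤N}(f_i(x_j)) · det_{1≤i,j≤N}(g_i(x_j)) is integrable on D^N with respect to the product measure μ^N. Then (1/N!) ∫_{D^N} det_{1≤i,j≤N}(f_i(x_j)) · det_{1≤i,j≤N}(g_i(x_j)) dμ^N(x_1,…,x_N) = det_{1≤i,j≤N}( ∫_D f_i(x) g_j(x) dμ(x) ). -/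
/-!
Expanding both determinants as sums over permutations writes the integrand as a signed double
sum of products `∏ⱼ f_{σ j}(x_j) g_{τ j}(x_j)`, each of which Fubini integrates to
`∏ⱼ ∫ f_{σ j} g_{τ j}`. For fixed `τ`, the sum over `σ` is the determinant of the Gram matrix
with its columns permuted by `τ`, i.e. `sign τ` times the Gram determinant, so each of the `N!`
permutations `τ` contributes exactly that determinant.
-/

open MeasureTheory Matrix Finset Equiv

namespace Matrix

variable {n R : Type*} [Fintype n] [DecidableEq n] [CommRing R]

theorem det_mul_det_eq_sum_sum_sign (A B : Matrix n n R) :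
    A.det * B.det = ∑ σ : Perm n, ∑ τ : Perm n,
      ((Perm.sign σ : ℤ) : R) * (Perm.sign τ : ℤ) * ∏ j, A (σ j) j * B (τ j) j := by
  rw [det_apply', det_apply', sum_mul_sum]
  refine sum_congr rfl fun σ _ => sum_congr rfl fun τ _ => ?_
  rw [prod_mul_distrib]
  ring

theorem sum_sum_sign_mul_prod_eq_card_perm_mul_det (M : Matrix n n R) :
    ∑ σ : Perm n, ∑ τ : Perm n, ((Perm.sign σ : ℤ) : R) * (Perm.sign τ : ℤ) * ∏ j, M (σ j) (τ j)
      = Fintype.card (Perm n) * M.det := by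
  rw [sum_comm]
  calc _ = ∑ τ : Perm n, ((Perm.sign τ : ℤ) : R) * (M.submatrix id τ).det := by
        refine sum_congr rfl fun τ _ => ?_
        rw [det_apply', mul_sum]
        refine sum_congr rfl fun σ _ => ?_
        simp only [submatrix_apply, id]
        ring
    _ = ∑ _τ : Perm n, M.det := by
        refine sum_congr rfl fun τ _ => ?_
        rw [det_permute', ← mul_assoc, ← Int.cast_mul, Int.units_coe_mul_self, Int.cast_one,
          one_mul]
    _ = Fintype.card (Perm n) * M.det := by
        rw [sum_const, card_univ, nsmul_eq_mul]

end Matrix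

theorem MeasureTheory.integral_det_mul_det_eq_sum_sum_sign {ι D 𝕜 : Type*} [Fintype ι]
    [DecidableEq ι] [MeasurableSpace D] {μ : Measure D} [SigmaFinite μ] [RCLike 𝕜]
    (f g : ι → D → 𝕜) (hfg : ∀ i j, Integrable (fun x => f i x * g j x) μ) :
    ∫ x : ι → D, (of fun i j => f i (x j)).det * (of fun i j => g i (x j)).det
        ∂(Measure.pi fun _ => μ)
      = ∑ σ : Perm ι, ∑ τ : Perm ι,
          ((Perm.sign σ : ℤ) : 𝕜) * (Perm.sign τ : ℤ) * ∏ j, ∫ x, f (σ j) x * g (τ j) x ∂μ := by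
  have hterm : ∀ σ τ : Perm ι, Integrable (fun x : ι → D =>
      ((Perm.sign σ : ℤ) : 𝕜) * (Perm.sign τ : ℤ) * ∏ j, f (σ j) (x j) * g (τ j) (x j))
      (Measure.pi fun _ => μ) := fun σ τ =>
    (Integrable.fintype_prod (f := fun j y => f (σ j) y * g (τ j) y)
      fun j => hfg (σ j) (τ j)).const_mul _
  simp only [det_mul_det_eq_sum_sum_sign, of_apply]
  rw [integral_finsetSum _ fun σ _ => integrable_finsetSum _ fun τ _ => hterm σ τ]
  refine sum_congr rfl fun σ _ => ?_
  rw [integral_finsetSum _ fun τ _ => hterm σ τ]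
  refine sum_congr rfl fun τ _ => ?_
  rw [integral_const_mul, integral_fintype_prod_eq_prod (fun j y => f (σ j) y * g (τ j) y)]

theorem andreief_heine_identity_general {D : Type*} [MeasurableSpace D] (μ : Measure D)
    [SigmaFinite μ] (N : ℕ) (f g : Fin N → D → ℂ)
    (hfg : ∀ i j, Integrable (fun x => f i x * g j x) μ) :
    (N.factorial : ℂ)⁻¹ *
        ∫ x : Fin N → D, (Matrix.of fun i j => f i (x j)).det *
          (Matrix.of fun i j => g i (x j)).det ∂(Measure.pi fun _ => μ)
      = (Matrix.of fun i j : Fin N => ∫ x, f i x * g j x ∂μ).det := by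
  rw [integral_det_mul_det_eq_sum_sum_sign f g hfg]
  have h := sum_sum_sign_mul_prod_eq_card_perm_mul_det
    (Matrix.of fun i j : Fin N => ∫ x, f i x * g j x ∂μ)
  simp only [of_apply, Fintype.card_perm, Fintype.card_fin] at h
  rw [h, inv_mul_cancel_left₀ (by exact_mod_cast N.factorial_ne_zero)]

/-- **Andréief–Heine identity.** Let `(D, μ)` be a measure space, `N ≥ 1`, and
`f_1,…,f_N, g_1,…,g_N : D → ℂ` measurable functions such that `f_i · g_j` is `μ`-integrable
for all `i, j`, and the function `(x_1,…,x_N) ↦ det(f_i(x_j)) · det(g_i(x_j))` is integrable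
on `D^N` with respect to the product measure `μ^N`. Then
`(1/N!) ∫_{D^N} det(f_i(x_j)) · det(g_i(x_j)) dμ^N = det( ∫_D f_i g_j dμ )`. -/
theorem andreief_heine_identity {D : Type*} [MeasurableSpace D] (μ : Measure D)
    [SigmaFinite μ] (N : ℕ) (hN : 1 ≤ N) (f g : Fin N → D → ℂ)
    (hf : ∀ i, Measurable (f i)) (hg : ∀ i, Measurable (g i))
    (hfg : ∀ i j, Integrable (fun x => f i x * g j x) μ)
    (hdet : Integrable (fun x : Fin N → D =>
        (Matrix.of fun i j => f i (x j)).det * (Matrix.of fun i j => g i (x j)).det)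
      (Measure.pi fun _ => μ)) :
    (N.factorial : ℂ)⁻¹ *
        ∫ x : Fin N → D, (Matrix.of fun i j => f i (x j)).det *
          (Matrix.of fun i j => g i (x j)).det ∂(Measure.pi fun _ => μ)
      = (Matrix.of fun i j : Fin N => ∫ x, f i x * g j x ∂μ).det :=
  andreief_heine_identity_general μ N f g hfg
end

section
/- The coupled matrix model partition function is a determinant of the norm matrix: for any monic polynomials p_0,…,p_{N−1} and q_0,…,q_{N−1} with deg p_k = deg q_k = k, and assuming all the integrals below are absolutely convergent, Z_N = det_{1≤i,j≤N}( ⟨p_{N−i}|ω|q_{N−j}⟩ ). -/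
open MeasureTheory Matrix Finset

/-- Vandermonde product `∏_{i<j} (x_i − x_j)` of a real tuple, as a complex number. -/
noncomputable def Delta {n : ℕ} (x : Fin n → ℝ) : ℂ :=
  ∏ i : Fin n, ∏ j ∈ Finset.Ioi i, ((x i : ℂ) - (x j : ℂ))

/-- Vandermonde product `∏_{α<β} (z_α − z_β)` of a complex tuple. -/
noncomputable def DeltaC {n : ℕ} (z : Fin n → ℂ) : ℂ :=
  ∏ i : Fin n, ∏ j ∈ Finset.Ioi i, (z i - z j)

/-- Integrand of the pairing `⟨f|ω|g⟩`. -/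
noncomputable def pairingIntegrand (wL wR : ℝ → ℂ) (ω : ℝ → ℝ → ℂ) (f g : ℝ → ℂ) :
    ℝ × ℝ → ℂ :=
  fun s => wL s.1 * wR s.2 * f s.1 * ω s.1 s.2 * g s.2

/-- The pairing `⟨f|ω|g⟩ = ∫ w_L(x) w_R(y) f(x) ω(x,y) g(y) dx dy`. -/
noncomputable def pairing (wL wR : ℝ → ℂ) (ω : ℝ → ℝ → ℂ) (f g : ℝ → ℂ) : ℂ :=
  ∫ s : ℝ × ℝ, pairingIntegrand wL wR ω f g s

/-- Integrand of the un-normalized coupled-matrix-model average `I_N[O]`. -/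
noncomputable def cmmIntegrand (N : ℕ) (wL wR : ℝ → ℂ) (ω : ℝ → ℝ → ℂ)
    (O : (Fin N → ℝ) → (Fin N → ℝ) → ℂ) : (Fin N → ℝ) × (Fin N → ℝ) → ℂ :=
  fun X => O X.1 X.2 * (∏ i, wL (X.1 i) * wR (X.2 i)) * Delta X.1 *
    (Matrix.of fun i j => ω (X.1 i) (X.2 j)).det * Delta X.2

/-- The un-normalized average `I_N[O]` of the coupled matrix model. -/
noncomputable def cmmAvg (N : ℕ) (wL wR : ℝ → ℂ) (ω : ℝ → ℝ → ℂ)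
    (O : (Fin N → ℝ) → (Fin N → ℝ) → ℂ) : ℂ :=
  ((N.factorial : ℂ) ^ 2)⁻¹ * ∫ X : (Fin N → ℝ) × (Fin N → ℝ), cmmIntegrand N wL wR ω O X

/-!
Both `Δ(X)` and `det[p_a(x_i)]` equal the Vandermonde determinant up to a sign depending only on
`N`, so `Δ(X) Δ(Y) = det[p_a(x_i)] det[q_b(y_j)]`. Absorbing the weights into the rows, the integrand
becomes `det[f_a(x_i)] det[ω(x_i, y_j)] det[g_b(y_j)]`. Expanding the middle determinant and
relabelling the `x`-variables in each of its `N!` terms reduces the integral to `N!` times that of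
`det[f_a(x_i)] ∏ ω(x_i, y_i) det[g_b(y_i)]`. In the paired variables `z_i = (x_i, y_i)` this is
Andréief's identity `∫ det[F_a(z_i)] det[G_b(z_i)] = N! det[∫ F_a G_b]`, contributing the second
`N!`. Reversing both row and column order does not change the final determinant.
-/

open Equiv

theorem Equiv.Perm.cast_sign_mul_self {R : Type*} [Ring R] {ι : Type*} [Fintype ι]
    [DecidableEq ι] (σ : Perm ι) : ((Perm.sign σ : ℤ) : R) * (Perm.sign σ : ℤ) = 1 := by
  rw [← Int.cast_mul, ← Units.val_mul, Int.units_mul_self, Units.val_one, Int.cast_one]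

namespace Matrix

variable {R : Type*} [CommRing R] {ι : Type*} [Fintype ι] [DecidableEq ι]

theorem sum_sign_mul_sign_mul_prod (M : Matrix ι ι R) :
    ∑ σ : Perm ι, ∑ ρ : Perm ι, (Perm.sign σ : ℤ) * (Perm.sign ρ : ℤ) * ∏ i, M (σ i) (ρ i)
      = ((Fintype.card ι).factorial : R) * M.det := by
  have inner (σ : Perm ι) :
      ∑ ρ : Perm ι, (Perm.sign σ : ℤ) * (Perm.sign ρ : ℤ) * ∏ i, M (σ i) (ρ i) = M.det := by
    have hρ : ∑ ρ : Perm ι, ((Perm.sign ρ : ℤ) : R) * ∏ i, M (σ i) (ρ i)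
        = (M.submatrix σ id)ᵀ.det := by
      rw [det_apply']
      rfl
    calc _ = ((Perm.sign σ : ℤ) : R) * ∑ ρ : Perm ι, (Perm.sign ρ : ℤ) * ∏ i, M (σ i) (ρ i) := by
          simp only [Finset.mul_sum, mul_assoc]
      _ = (Perm.sign σ : ℤ) * ((Perm.sign σ : ℤ) * M.det) := by
          rw [hρ, det_transpose, det_permute]
      _ = M.det := by rw [← mul_assoc, Perm.cast_sign_mul_self, one_mul]
  simp only [inner, Finset.sum_const, Finset.card_univ, Fintype.card_perm, nsmul_eq_mul]

theorem det_mul_det_eq_sum_sum (A B : Matrix ι ι R) :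
    A.det * B.det = ∑ σ : Perm ι, ∑ ρ : Perm ι,
      (Perm.sign σ : ℤ) * (Perm.sign ρ : ℤ) * ∏ i, A (σ i) i * B (ρ i) i := by
  simp only [det_apply', Finset.sum_mul_sum, Finset.prod_mul_distrib]
  refine Finset.sum_congr rfl fun σ _ => Finset.sum_congr rfl fun ρ _ => ?_
  ring

theorem det_mul_det_mul_det_eq_sum_comp_perm {α β : Type*} (f : ι → α → R) (K : α → β → R)
    (g : ι → β → R) (X : ι → α) (Y : ι → β) :
    (of fun a i => f a (X i)).det * (of fun i j => K (X i) (Y j)).det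
        * (of fun b j => g b (Y j)).det
      = ∑ τ : Perm ι, (of fun a i => f a (X (τ i))).det * (∏ i, K (X (τ i)) (Y i))
        * (of fun b j => g b (Y j)).det := by
  rw [det_apply' (of fun i j => K (X i) (Y j)), Finset.mul_sum, Finset.sum_mul]
  refine Finset.sum_congr rfl fun τ _ => ?_
  have hperm : (of fun a i => f a (X (τ i))).det
      = (Perm.sign τ : ℤ) * (of fun a i => f a (X i)).det :=
    det_permute' τ (of fun a i => f a (X i))
  rw [hperm]
  simp only [of_apply]
  ring

theorem det_vandermonde_eq_det_eval {n : ℕ} (v : Fin n → R) (p : ℕ → Polynomial R)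
    (hp : ∀ k < n, (p k).Monic ∧ (p k).natDegree = k) :
    (vandermonde v).det = (of fun a i : Fin n => (p a).eval (v i)).det := by
  rw [det_eval_matrixOfPolynomials_eq_det_vandermonde v (fun a => p a) (fun a => (hp a a.2).2)
    (fun a => (hp a a.2).1), ← det_transpose]
  rfl

theorem det_of_sub_one_sub {N : ℕ} (M : ℕ → ℕ → R) :
    (of fun i j : Fin N => M (N - 1 - i) (N - 1 - j)).det = (of fun a b : Fin N => M a b).det := by
  rw [← det_submatrix_equiv_self Fin.revPerm (of fun a b : Fin N => M a b)]
  congr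
  ext i j
  simp only [of_apply, Fin.revPerm_apply, Fin.val_rev, Nat.sub_sub, Nat.add_comm 1]

end Matrix

theorem DeltaC_mul_DeltaC {n : ℕ} (z w : Fin n → ℂ) :
    DeltaC z * DeltaC w = (vandermonde z).det * (vandermonde w).det := by
  have hΔ (v : Fin n → ℂ) :
      DeltaC v = (∏ i : Fin n, ∏ _j ∈ Ioi i, (-1 : ℂ)) * (vandermonde v).det := by
    simp only [DeltaC, det_vandermonde, ← Finset.prod_mul_distrib, neg_one_mul, neg_sub]
  have hsq : (∏ i : Fin n, ∏ _j ∈ Ioi i, (-1 : ℂ)) ^ 2 = 1 := by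
    simp only [← Finset.prod_pow, neg_one_sq, Finset.prod_const_one]
  rw [hΔ z, hΔ w]
  linear_combination (vandermonde z).det * (vandermonde w).det * hsq

section Andreief

variable {𝕜 : Type*} [RCLike 𝕜] {ι : Type*} [Fintype ι] [DecidableEq ι]
  {E : Type*} [MeasurableSpace E] {μ : Measure E} [SigmaFinite μ] {F G : ι → E → 𝕜}

theorem integrable_det_mul_det (hFG : ∀ a b, Integrable (fun x => F a x * G b x) μ) :
    Integrable (fun z : ι → E => (of fun a i => F a (z i)).det * (of fun b i => G b (z i)).det)
      (Measure.pi fun _ => μ) := by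
  simp only [det_mul_det_eq_sum_sum, of_apply]
  exact integrable_finsetSum _ fun σ _ => integrable_finsetSum _ fun ρ _ =>
    (Integrable.fintype_prod fun i => hFG (σ i) (ρ i)).const_mul _

/-- Andréief's identity. -/
theorem integral_det_mul_det (hFG : ∀ a b, Integrable (fun x => F a x * G b x) μ) :
    ∫ z : ι → E, (of fun a i => F a (z i)).det * (of fun b i => G b (z i)).det
        ∂(Measure.pi fun _ => μ)
      = (Fintype.card ι).factorial * (of fun a b => ∫ x, F a x * G b x ∂μ).det := by
  have hterm (σ ρ : Perm ι) : Integrable (fun z : ι → E => ((Perm.sign σ : ℤ) : 𝕜)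
      * (Perm.sign ρ : ℤ) * ∏ i, F (σ i) (z i) * G (ρ i) (z i)) (Measure.pi fun _ => μ) :=
    (Integrable.fintype_prod fun i => hFG (σ i) (ρ i)).const_mul _
  simp only [det_mul_det_eq_sum_sum, of_apply]
  rw [integral_finsetSum _ fun σ _ => integrable_finsetSum _ fun ρ _ => hterm σ ρ,
    ← sum_sign_mul_sign_mul_prod]
  refine Finset.sum_congr rfl fun σ _ => ?_
  rw [integral_finsetSum _ fun ρ _ => hterm σ ρ]
  refine Finset.sum_congr rfl fun ρ _ => ?_
  rw [integral_const_mul, integral_fintype_prod_eq_prod (fun i x => F (σ i) x * G (ρ i) x)]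
  rfl

end Andreief

section Coupled

variable {𝕜 : Type*} [RCLike 𝕜] {ι : Type*} [Fintype ι] [DecidableEq ι]
  {α β : Type*} [MeasurableSpace α] [MeasurableSpace β] {μ : Measure α} {ν : Measure β}
  [SigmaFinite μ] [SigmaFinite ν] {f : ι → α → 𝕜} {K : α → β → 𝕜} {g : ι → β → 𝕜}

theorem det_mul_prod_mul_det_comp_arrowProdEquivProdArrow :
    (fun Z : (ι → α) × (ι → β) => (of fun a i => f a (Z.1 i)).det
      * (∏ i, K (Z.1 i) (Z.2 i)) * (of fun b j => g b (Z.2 j)).det)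
        ∘ MeasurableEquiv.arrowProdEquivProdArrow α β ι
      = fun z => (of fun a i => f a (z i).1 * K (z i).1 (z i).2).det
        * (of fun b i => g b (z i).2).det := by
  funext z
  have hrow : (of fun a i => f a (z i).1 * K (z i).1 (z i).2).det
      = (∏ i, K (z i).1 (z i).2) * (of fun a i => f a (z i).1).det := by
    simpa only [of_apply, mul_comm] using
      det_mul_row (fun i => K (z i).1 (z i).2) (of fun a i => f a (z i).1)
  rw [hrow]
  change (of fun a i => f a (z i).1).det * (∏ i, K (z i).1 (z i).2)
    * (of fun b j => g b (z j).2).det = _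
  ring

theorem integrable_det_mul_prod_mul_det
    (hfKg : ∀ a b, Integrable (fun s : α × β => f a s.1 * K s.1 s.2 * g b s.2) (μ.prod ν)) :
    Integrable (fun Z : (ι → α) × (ι → β) => (of fun a i => f a (Z.1 i)).det
      * (∏ i, K (Z.1 i) (Z.2 i)) * (of fun b j => g b (Z.2 j)).det)
      ((Measure.pi fun _ => μ).prod (Measure.pi fun _ => ν)) := by
  rw [← (measurePreserving_arrowProdEquivProdArrow α β ι (fun _ => μ) (fun _ => ν)).integrable_comp_emb
    (MeasurableEquiv.measurableEmbedding _), det_mul_prod_mul_det_comp_arrowProdEquivProdArrow]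
  exact integrable_det_mul_det hfKg

theorem integral_det_mul_prod_mul_det
    (hfKg : ∀ a b, Integrable (fun s : α × β => f a s.1 * K s.1 s.2 * g b s.2) (μ.prod ν)) :
    ∫ Z : (ι → α) × (ι → β), (of fun a i => f a (Z.1 i)).det
      * (∏ i, K (Z.1 i) (Z.2 i)) * (of fun b j => g b (Z.2 j)).det
        ∂((Measure.pi fun _ => μ).prod (Measure.pi fun _ => ν))
      = (Fintype.card ι).factorial
        * (of fun a b => ∫ s, f a s.1 * K s.1 s.2 * g b s.2 ∂(μ.prod ν)).det := by
  rw [← (measurePreserving_arrowProdEquivProdArrow α β ι (fun _ => μ) (fun _ => ν)).integral_comp',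
    ← integral_det_mul_det hfKg]
  exact congrArg (integral _) det_mul_prod_mul_det_comp_arrowProdEquivProdArrow

omit [DecidableEq ι] in
theorem measurePreserving_permute_fst (τ : Perm ι) :
    MeasurePreserving
      ((MeasurableEquiv.arrowCongr' τ.symm (MeasurableEquiv.refl α)).prodCongr
        (MeasurableEquiv.refl (ι → β)))
      ((Measure.pi fun _ => μ).prod (Measure.pi fun _ => ν))
      ((Measure.pi fun _ => μ).prod (Measure.pi fun _ => ν)) :=
  (measurePreserving_arrowCongr' _ _ τ.symm _ fun _ => .id μ).prod (.id _)

theorem integral_det_mul_det_mul_det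
    (hfKg : ∀ a b, Integrable (fun s : α × β => f a s.1 * K s.1 s.2 * g b s.2) (μ.prod ν)) :
    ∫ Z : (ι → α) × (ι → β), (of fun a i => f a (Z.1 i)).det
      * (of fun i j => K (Z.1 i) (Z.2 j)).det * (of fun b j => g b (Z.2 j)).det
        ∂((Measure.pi fun _ => μ).prod (Measure.pi fun _ => ν))
      = (Fintype.card ι).factorial ^ 2
        * (of fun a b => ∫ s, f a s.1 * K s.1 s.2 * g b s.2 ∂(μ.prod ν)).det := by
  set T : (ι → α) × (ι → β) → 𝕜 := fun Z => (of fun a i => f a (Z.1 i)).det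
      * (∏ i, K (Z.1 i) (Z.2 i)) * (of fun b j => g b (Z.2 j)).det
  have hint (τ : Perm ι) :
      Integrable (fun Z : (ι → α) × (ι → β) => (of fun a i => f a (Z.1 (τ i))).det
        * (∏ i, K (Z.1 (τ i)) (Z.2 i)) * (of fun b j => g b (Z.2 j)).det)
        ((Measure.pi fun _ => μ).prod (Measure.pi fun _ => ν)) :=
    ((measurePreserving_permute_fst τ).integrable_comp_emb
      (MeasurableEquiv.measurableEmbedding _)).mpr (integrable_det_mul_prod_mul_det hfKg)
  have hintegral (τ : Perm ι) :
      ∫ Z, (of fun a i => f a (Z.1 (τ i))).det * (∏ i, K (Z.1 (τ i)) (Z.2 i))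
        * (of fun b j => g b (Z.2 j)).det ∂((Measure.pi fun _ => μ).prod (Measure.pi fun _ => ν))
        = ∫ Z, T Z ∂((Measure.pi fun _ => μ).prod (Measure.pi fun _ => ν)) :=
    (measurePreserving_permute_fst τ).integral_comp' T
  simp only [det_mul_det_mul_det_eq_sum_comp_perm]
  rw [integral_finsetSum _ fun τ _ => hint τ]
  simp only [hintegral, Finset.sum_const, Finset.card_univ, Fintype.card_perm, nsmul_eq_mul, T,
    integral_det_mul_prod_mul_det hfKg]
  ring

end Coupled

theorem pairingIntegrand_eq (wL wR : ℝ → ℂ) (ω : ℝ → ℝ → ℂ) (f g : ℝ → ℂ) :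
    pairingIntegrand wL wR ω f g = fun s => wL s.1 * f s.1 * ω s.1 s.2 * (wR s.2 * g s.2) := by
  funext s
  simp only [pairingIntegrand]
  ring

theorem cmmIntegrand_one_eq {N : ℕ} (wL wR : ℝ → ℂ) (ω : ℝ → ℝ → ℂ) (p q : ℕ → Polynomial ℂ)
    (hp : ∀ k < N, (p k).Monic ∧ (p k).natDegree = k)
    (hq : ∀ k < N, (q k).Monic ∧ (q k).natDegree = k) :
    cmmIntegrand N wL wR ω (fun _ _ => 1) = fun Z =>
      (of fun a i : Fin N => wL (Z.1 i) * (p a).eval (Z.1 i : ℂ)).det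
        * (of fun i j => ω (Z.1 i) (Z.2 j)).det
        * (of fun b j : Fin N => wR (Z.2 j) * (q b).eval (Z.2 j : ℂ)).det := by
  funext ⟨X, Y⟩
  have hΔ : Delta X * Delta Y = (of fun a i : Fin N => (p a).eval (X i : ℂ)).det
      * (of fun b j : Fin N => (q b).eval (Y j : ℂ)).det := by
    rw [← det_vandermonde_eq_det_eval _ p hp, ← det_vandermonde_eq_det_eval _ q hq]
    exact DeltaC_mul_DeltaC _ _
  have hL : (of fun a i : Fin N => wL (X i) * (p a).eval (X i : ℂ)).det
      = (∏ i, wL (X i)) * (of fun a i : Fin N => (p a).eval (X i : ℂ)).det :=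
    det_mul_row _ _
  have hR : (of fun b j : Fin N => wR (Y j) * (q b).eval (Y j : ℂ)).det
      = (∏ j, wR (Y j)) * (of fun b j : Fin N => (q b).eval (Y j : ℂ)).det :=
    det_mul_row _ _
  simp only [cmmIntegrand, hL, hR, Finset.prod_mul_distrib]
  linear_combination (∏ i, wL (X i)) * (∏ i, wR (Y i)) * (of fun i j => ω (X i) (Y j)).det * hΔ

theorem coupled_partition_function_det_general (N : ℕ)
    (wL wR : ℝ → ℂ) (ω : ℝ → ℝ → ℂ)
    (p q : ℕ → Polynomial ℂ)
    (hp : ∀ k < N, (p k).Monic ∧ (p k).natDegree = k)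
    (hq : ∀ k < N, (q k).Monic ∧ (q k).natDegree = k)
    (hpair : ∀ i < N, ∀ j < N, Integrable (pairingIntegrand wL wR ω
      (fun x => (p i).eval (x : ℂ)) (fun y => (q j).eval (y : ℂ)))) :
    cmmAvg N wL wR ω (fun _ _ => 1)
      = (Matrix.of fun i j : Fin N =>
          pairing wL wR ω (fun x => (p (N - 1 - (i : ℕ))).eval (x : ℂ))
            (fun y => (q (N - 1 - (j : ℕ))).eval (y : ℂ))).det := by
  have hint (a b : Fin N) : Integrable (fun s : ℝ × ℝ => wL s.1 * (p a).eval (s.1 : ℂ)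
      * ω s.1 s.2 * (wR s.2 * (q b).eval (s.2 : ℂ))) (volume.prod volume) := by
    simpa only [pairingIntegrand_eq, Measure.volume_eq_prod] using hpair a a.2 b b.2
  have hI := integral_det_mul_det_mul_det (ι := Fin N) (μ := (volume : Measure ℝ))
    (ν := (volume : Measure ℝ)) (f := fun a x => wL x * (p a).eval (x : ℂ)) (K := ω)
    (g := fun b y => wR y * (q b).eval (y : ℂ)) hint
  rw [← volume_pi, ← Measure.volume_eq_prod] at hI
  rw [det_of_sub_one_sub fun k l => pairing wL wR ω (fun x => (p k).eval (x : ℂ))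
      (fun y => (q l).eval (y : ℂ)), cmmAvg, cmmIntegrand_one_eq wL wR ω p q hp hq, hI]
  simp only [Fintype.card_fin]
  rw [inv_mul_cancel_left₀ (pow_ne_zero _ (Nat.cast_ne_zero.mpr N.factorial_ne_zero))]
  simp only [pairing, pairingIntegrand_eq, Measure.volume_eq_prod]

/-- The coupled matrix model partition function is a determinant of the norm matrix:
for monic polynomials `p_0,…,p_{N−1}` and `q_0,…,q_{N−1}` with `deg p_k = deg q_k = k`,
assuming all integrals are absolutely convergent,
`Z_N = det_{1≤i,j≤N}( ⟨p_{N−i}|ω|q_{N−j}⟩ )`. -/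
theorem coupled_partition_function_det (N : ℕ) (hN : 1 ≤ N)
    (wL wR : ℝ → ℂ) (ω : ℝ → ℝ → ℂ)
    (hwL : Measurable wL) (hwR : Measurable wR) (hω : Measurable (Function.uncurry ω))
    (p q : ℕ → Polynomial ℂ)
    (hp : ∀ k < N, (p k).Monic ∧ (p k).natDegree = k)
    (hq : ∀ k < N, (q k).Monic ∧ (q k).natDegree = k)
    (hZ : Integrable (cmmIntegrand N wL wR ω fun _ _ => 1))
    (hpair : ∀ i < N, ∀ j < N, Integrable (pairingIntegrand wL wR ω
      (fun x => (p i).eval (x : ℂ)) (fun y => (q j).eval (y : ℂ)))) :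
    cmmAvg N wL wR ω (fun _ _ => 1)
      = (Matrix.of fun i j : Fin N =>
          pairing wL wR ω (fun x => (p (N - 1 - (i : ℕ))).eval (x : ℂ))
            (fun y => (q (N - 1 - (j : ℕ))).eval (y : ℂ))).det :=
  coupled_partition_function_det_general N wL wR ω p q hp hq hpair
end

section
/- Schur polynomial average in bialternant form: Let λ and μ be partitions with at most N parts, i.e. λ_1 ≥ … ≥ λ_N ≥ 0 and μ_1 ≥ … ≥ μ_N ≥ 0 are integers. Assuming all the integrals below are absolutely convergent, (1/N!²) ∫_{ℝ^N×ℝ^N} (∏_{i=1}^N w_L(x_{L,i}) w_R(x_{R,i})) · det_{1≤i,j≤N}( x_{L,i}^{λ_j+N−j} ) · det_{1≤i,j≤N} ω(x_{L,i}, x_{R,j}) · det_{1≤i,j≤N}( x_{R,i}^{μ_j+N−j} ) dX_L dX_R = det_{1≤i,j≤N}( ⟨x^{λ_i+N−i}|ω|x^{μ_j+N−j}⟩ ), where ⟨x^a|ω|x^b⟩ denotes the pairing of the monomials x ↦ x^a and y ↦ y^b. -/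
open MeasureTheory Matrix Finset

/-!
Expanding the two outer determinants over permutations `σ, τ` writes the integrand as
`∑_{σ,τ} B(x ∘ σ, y ∘ τ)`, where `B(x, y) = det [w_L(x_i) f_i(x_i) ω(x_i, y_j) w_R(y_j) g_j(y_j)]`.
Lebesgue measure is invariant under permuting coordinates, so each of the `N!²` terms integrates
to `∫ B`. Expanding this last determinant, every term is a product of functions of the
disjoint pairs `(x_i, y_{π i})`, so Fubini gives `∫ B = det ⟨f_i|ω|g_j⟩`.
-/

section PermutationInvariance

variable {ι α β E : Type*} [MeasureSpace α] [MeasureSpace β]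

def MeasurableEquiv.permProd (σ τ : Equiv.Perm ι) :
    ((ι → α) × (ι → β)) ≃ᵐ ((ι → α) × (ι → β)) :=
  (MeasurableEquiv.arrowCongr' σ.symm (.refl α)).prodCongr
    (MeasurableEquiv.arrowCongr' τ.symm (.refl β))

variable [Fintype ι] [SigmaFinite (volume : Measure α)] [SigmaFinite (volume : Measure β)]
  [NormedAddCommGroup E]

theorem measurePreserving_permProd (σ τ : Equiv.Perm ι) :
    MeasurePreserving (MeasurableEquiv.permProd σ τ : (ι → α) × (ι → β) → _) :=
  (volume_preserving_arrowCongr' _ _ (.id _)).prod (volume_preserving_arrowCongr' _ _ (.id _))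

theorem MeasureTheory.Integrable.comp_perm_prod {F : (ι → α) × (ι → β) → E} (hF : Integrable F)
    (σ τ : Equiv.Perm ι) : Integrable fun X : (ι → α) × (ι → β) => F (X.1 ∘ σ, X.2 ∘ τ) :=
  (measurePreserving_permProd σ τ).integrable_comp_of_integrable hF

variable [NormedSpace ℝ E]

theorem integral_comp_perm_prod (σ τ : Equiv.Perm ι) (F : (ι → α) × (ι → β) → E) :
    ∫ X : (ι → α) × (ι → β), F (X.1 ∘ σ, X.2 ∘ τ) = ∫ X, F X :=
  (measurePreserving_permProd σ τ).integral_comp' F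

end PermutationInvariance

section PairedCoordinates

variable {ι α β 𝕜 : Type*} [Fintype ι] [MeasureSpace α] [MeasureSpace β]
  [SigmaFinite (volume : Measure α)] [SigmaFinite (volume : Measure β)] [RCLike 𝕜]

theorem integral_prod_pairs (k : ι → α × β → 𝕜) :
    ∫ X : (ι → α) × (ι → β), ∏ i, k i (X.1 i, X.2 i) = ∏ i, ∫ s, k i s := by
  rw [← (volume_measurePreserving_arrowProdEquivProdArrow α β ι).integral_comp']
  exact integral_fintype_prod_volume_eq_prod k

theorem integrable_prod_pairs {k : ι → α × β → 𝕜} (hk : ∀ i, Integrable (k i)) :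
    Integrable fun X : (ι → α) × (ι → β) => ∏ i, k i (X.1 i, X.2 i) :=
  (volume_measurePreserving_arrowProdEquivProdArrow α β ι).symm.integrable_comp_of_integrable
    (Integrable.fintype_prod hk)

theorem integral_prod_perm_pairs (k : ι → ι → α × β → 𝕜) (σ : Equiv.Perm ι) :
    ∫ X : (ι → α) × (ι → β), ∏ i, k (σ i) i (X.1 (σ i), X.2 i) = ∏ i, ∫ s, k (σ i) i s := by
  rw [← integral_comp_perm_prod σ⁻¹ 1]
  simpa using integral_prod_pairs fun i => k (σ i) i

theorem integrable_prod_perm_pairs {k : ι → ι → α × β → 𝕜} (hk : ∀ i j, Integrable (k i j))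
    (σ : Equiv.Perm ι) :
    Integrable fun X : (ι → α) × (ι → β) => ∏ i, k (σ i) i (X.1 (σ i), X.2 i) :=
  (integrable_prod_pairs fun i => hk (σ i) i).comp_perm_prod σ 1

variable [DecidableEq ι] {k : ι → ι → α × β → 𝕜}

theorem integrable_det_of_pairs (hk : ∀ i j, Integrable (k i j)) :
    Integrable fun X : (ι → α) × (ι → β) => (of fun i j => k i j (X.1 i, X.2 j)).det := by
  simp only [det_apply', of_apply]
  exact integrable_finsetSum _ fun σ _ =>
    (integrable_prod_perm_pairs hk σ).const_mul _

theorem integral_det_of_pairs (hk : ∀ i j, Integrable (k i j)) :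
    ∫ X : (ι → α) × (ι → β), (of fun i j => k i j (X.1 i, X.2 j)).det =
      (of fun i j => ∫ s, k i j s).det := by
  simp only [det_apply', of_apply]
  rw [integral_finsetSum _ fun σ _ => (integrable_prod_perm_pairs hk σ).const_mul _]
  simp only [integral_const_mul, integral_prod_perm_pairs]

end PairedCoordinates

section CoupledMatrixModel

variable (wL wR : ℝ → ℂ) (ω : ℝ → ℝ → ℂ) {ι : Type*} [Fintype ι] [DecidableEq ι]
  (f g : ι → ℝ → ℂ)

noncomputable def pairingIntegrandDet (x y : ι → ℝ) : ℂ :=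
  (of fun i j => pairingIntegrand wL wR ω (f i) (g j) (x i, y j)).det

theorem pairingIntegrandDet_eq (x y : ι → ℝ) :
    pairingIntegrandDet wL wR ω f g x y =
      (∏ i, wL (x i) * f i (x i)) * (∏ j, wR (y j) * g j (y j)) *
        (of fun i j => ω (x i) (y j)).det := by
  rw [mul_assoc, ← det_mul_row, ← det_mul_column]
  simp only [pairingIntegrandDet, pairingIntegrand, of_apply]
  congr
  ext i j
  ring

theorem sum_perm_pairingIntegrandDet (x y : ι → ℝ) :
    ∑ σ : Equiv.Perm ι, ∑ τ : Equiv.Perm ι, pairingIntegrandDet wL wR ω f g (x ∘ σ) (y ∘ τ) =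
      (∏ i, wL (x i) * wR (y i)) * (of fun i j => f j (x i)).det *
        (of fun i j => ω (x i) (y j)).det * (of fun i j => g j (y i)).det := by
  have hdetω (σ τ : Equiv.Perm ι) : (of fun i j => ω (x (σ i)) (y (τ j))).det =
      Equiv.Perm.sign σ * (Equiv.Perm.sign τ * (of fun i j => ω (x i) (y j)).det) := by
    rw [← det_permute', ← det_permute]
    rfl
  have hL : (∏ i, wL (x i)) * (of fun i j => f j (x i)).det =
      ∑ σ : Equiv.Perm ι, Equiv.Perm.sign σ * ∏ i, wL (x (σ i)) * f i (x (σ i)) := by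
    rw [← det_mul_column, det_apply']
    rfl
  have hR : (∏ i, wR (y i)) * (of fun i j => g j (y i)).det =
      ∑ τ : Equiv.Perm ι, Equiv.Perm.sign τ * ∏ i, wR (y (τ i)) * g i (y (τ i)) := by
    rw [← det_mul_column, det_apply']
    rfl
  calc ∑ σ : Equiv.Perm ι, ∑ τ : Equiv.Perm ι, pairingIntegrandDet wL wR ω f g (x ∘ σ) (y ∘ τ)
      = ∑ σ : Equiv.Perm ι, ∑ τ : Equiv.Perm ι,
          (Equiv.Perm.sign σ * ∏ i, wL (x (σ i)) * f i (x (σ i))) *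
            (Equiv.Perm.sign τ * ∏ i, wR (y (τ i)) * g i (y (τ i))) *
              (of fun i j => ω (x i) (y j)).det := by
        simp only [pairingIntegrandDet_eq, Function.comp_apply, hdetω]
        exact sum_congr rfl fun σ _ => sum_congr rfl fun τ _ => by ring
    _ = (∏ i, wL (x i)) * (of fun i j => f j (x i)).det *
          ((∏ i, wR (y i)) * (of fun i j => g j (y i)).det) *
            (of fun i j => ω (x i) (y j)).det := by
        rw [hL, hR, sum_mul_sum, sum_mul]
        simp only [sum_mul]
    _ = _ := by
        rw [prod_mul_distrib]
        ring

theorem integral_weighted_det_mul_det_mul_det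
    (hpair : ∀ i j, Integrable (pairingIntegrand wL wR ω (f i) (g j))) :
    ∫ X : (ι → ℝ) × (ι → ℝ), (∏ i, wL (X.1 i) * wR (X.2 i)) *
        (of fun i j => f j (X.1 i)).det * (of fun i j => ω (X.1 i) (X.2 j)).det *
          (of fun i j => g j (X.2 i)).det =
      ((Fintype.card ι).factorial : ℂ) ^ 2 * (of fun i j => pairing wL wR ω (f i) (g j)).det := by
  have hB : Integrable fun X : (ι → ℝ) × (ι → ℝ) => pairingIntegrandDet wL wR ω f g X.1 X.2 :=
    integrable_det_of_pairs hpair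
  calc _ = ∫ X : (ι → ℝ) × (ι → ℝ), ∑ σ : Equiv.Perm ι, ∑ τ : Equiv.Perm ι,
          pairingIntegrandDet wL wR ω f g (X.1 ∘ σ) (X.2 ∘ τ) := by
        simp only [sum_perm_pairingIntegrandDet]
    _ = ∑ σ : Equiv.Perm ι, ∑ τ : Equiv.Perm ι,
          ∫ X : (ι → ℝ) × (ι → ℝ), pairingIntegrandDet wL wR ω f g (X.1 ∘ σ) (X.2 ∘ τ) := by
        rw [integral_finsetSum _ fun σ _ =>
          integrable_finsetSum _ fun τ _ => hB.comp_perm_prod σ τ]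
        exact sum_congr rfl fun σ _ =>
          integral_finsetSum _ fun τ _ => hB.comp_perm_prod σ τ
    _ = ∑ _σ : Equiv.Perm ι, ∑ _τ : Equiv.Perm ι,
          ∫ X : (ι → ℝ) × (ι → ℝ), pairingIntegrandDet wL wR ω f g X.1 X.2 :=
        sum_congr rfl fun σ _ => sum_congr rfl fun τ _ =>
          integral_comp_perm_prod σ τ fun X => pairingIntegrandDet wL wR ω f g X.1 X.2
    _ = _ := by
        simp only [pairingIntegrandDet, integral_det_of_pairs hpair, sum_const, card_univ,
          Fintype.card_perm, nsmul_eq_mul, pairing]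
        ring

end CoupledMatrixModel

theorem schur_polynomial_average_general (N : ℕ)
    (wL wR : ℝ → ℂ) (ω : ℝ → ℝ → ℂ)
    (lam mu : Fin N → ℕ)
    (hpair : ∀ i j : Fin N, Integrable (pairingIntegrand wL wR ω
      (fun x => (x : ℂ) ^ (lam i + (N - 1 - (i : ℕ))))
      (fun y => (y : ℂ) ^ (mu j + (N - 1 - (j : ℕ)))))) :
    ((N.factorial : ℂ) ^ 2)⁻¹ * ∫ X : (Fin N → ℝ) × (Fin N → ℝ),
        (∏ i, wL (X.1 i) * wR (X.2 i)) *
          (Matrix.of fun i j : Fin N => (X.1 i : ℂ) ^ (lam j + (N - 1 - (j : ℕ)))).det *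
          (Matrix.of fun i j => ω (X.1 i) (X.2 j)).det *
          (Matrix.of fun i j : Fin N => (X.2 i : ℂ) ^ (mu j + (N - 1 - (j : ℕ)))).det
      = (Matrix.of fun i j : Fin N =>
          pairing wL wR ω (fun x => (x : ℂ) ^ (lam i + (N - 1 - (i : ℕ))))
            (fun y => (y : ℂ) ^ (mu j + (N - 1 - (j : ℕ))))).det := by
  have h := integral_weighted_det_mul_det_mul_det wL wR ω
    (fun i x => (x : ℂ) ^ (lam i + (N - 1 - (i : ℕ))))
    (fun j y => (y : ℂ) ^ (mu j + (N - 1 - (j : ℕ)))) hpair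
  rw [Fintype.card_fin] at h
  rw [h, ← mul_assoc, inv_mul_cancel₀ (by simp [Nat.factorial_ne_zero]), one_mul]

/-- **Schur polynomial average in bialternant form.** For partitions `λ, μ` with at most
`N` parts, assuming absolute convergence of all integrals,
`(1/N!²) ∫ (∏ w_L w_R) det(x_{L,i}^{λ_j+N−j}) det ω(x_{L,i},x_{R,j}) det(x_{R,i}^{μ_j+N−j})
= det( ⟨x^{λ_i+N−i}|ω|x^{μ_j+N−j}⟩ )`. -/
theorem schur_polynomial_average (N : ℕ) (hN : 1 ≤ N)
    (wL wR : ℝ → ℂ) (ω : ℝ → ℝ → ℂ)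
    (hwL : Measurable wL) (hwR : Measurable wR) (hω : Measurable (Function.uncurry ω))
    (lam mu : Fin N → ℕ) (hlam : Antitone lam) (hmu : Antitone mu)
    (hint : Integrable (fun X : (Fin N → ℝ) × (Fin N → ℝ) =>
      (∏ i, wL (X.1 i) * wR (X.2 i)) *
        (Matrix.of fun i j : Fin N => (X.1 i : ℂ) ^ (lam j + (N - 1 - (j : ℕ)))).det *
        (Matrix.of fun i j => ω (X.1 i) (X.2 j)).det *
        (Matrix.of fun i j : Fin N => (X.2 i : ℂ) ^ (mu j + (N - 1 - (j : ℕ)))).det))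
    (hpair : ∀ i j : Fin N, Integrable (pairingIntegrand wL wR ω
      (fun x => (x : ℂ) ^ (lam i + (N - 1 - (i : ℕ))))
      (fun y => (y : ℂ) ^ (mu j + (N - 1 - (j : ℕ)))))) :
    ((N.factorial : ℂ) ^ 2)⁻¹ * ∫ X : (Fin N → ℝ) × (Fin N → ℝ),
        (∏ i, wL (X.1 i) * wR (X.2 i)) *
          (Matrix.of fun i j : Fin N => (X.1 i : ℂ) ^ (lam j + (N - 1 - (j : ℕ)))).det *
          (Matrix.of fun i j => ω (X.1 i) (X.2 j)).det *
          (Matrix.of fun i j : Fin N => (X.2 i : ℂ) ^ (mu j + (N - 1 - (j : ℕ)))).det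
      = (Matrix.of fun i j : Fin N =>
          pairing wL wR ω (fun x => (x : ℂ) ^ (lam i + (N - 1 - (i : ℕ))))
            (fun y => (y : ℂ) ^ (mu j + (N - 1 - (j : ℕ))))).det :=
  schur_polynomial_average_general N wL wR ω lam mu hpair
end

section
/- Coupled polynomial ensemble partition function as a determinant: Let N ≥ 1, let f_{L,0},…,f_{L,N−1} : ℝ → ℂ be measurable functions, and let q_0,…,q_{N−1} be monic polynomials with deg q_k = k. Assuming all the integrals below are absolutely convergent, Z_{N,f_L} := (1/N!²) ∫_{ℝ^N×ℝ^N} (∏_{i=1}^N w_R(x_{R,i})) · det_{1≤i,j≤N}( f_{L,N−i}(x_{L,j}) ) · det_{1≤i,j≤N} ω(x_{L,i}, x_{R,j}) · Δ_N(X_R) dX_L dX_R = det_{1≤i,j≤N}( ⟨f_{L,N−i}|ω|q_{N−j}⟩_R ), where ⟨f|ω|g⟩_R = ∫_{ℝ²} w_R(y) f(x) ω(x,y) g(y) dx dy. -/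
open MeasureTheory Matrix Finset

/-- Integrand of the one-sided pairing `⟨f|ω|g⟩_R = ∫ w_R(y) f(x) ω(x,y) g(y) dx dy`. -/
noncomputable def pairingRIntegrand (wR : ℝ → ℂ) (ω : ℝ → ℝ → ℂ) (f g : ℝ → ℂ) :
    ℝ × ℝ → ℂ :=
  fun s => wR s.2 * f s.1 * ω s.1 s.2 * g s.2

/-- The one-sided pairing `⟨f|ω|g⟩_R = ∫ w_R(y) f(x) ω(x,y) g(y) dx dy`. -/
noncomputable def pairingR (wR : ℝ → ℂ) (ω : ℝ → ℝ → ℂ) (f g : ℝ → ℂ) : ℂ :=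
  ∫ s : ℝ × ℝ, pairingRIntegrand wR ω f g s

/-- Integrand of the coupled polynomial ensemble partition function `Z_{N,f_L}`. -/
noncomputable def peIntegrand (N : ℕ) (wR : ℝ → ℂ) (ω : ℝ → ℝ → ℂ) (f : ℕ → ℝ → ℂ) :
    (Fin N → ℝ) × (Fin N → ℝ) → ℂ :=
  fun X => (∏ i, wR (X.2 i)) *
    (Matrix.of fun i j : Fin N => f (N - 1 - (i : ℕ)) (X.1 j)).det *
    (Matrix.of fun i j => ω (X.1 i) (X.2 j)).det * Delta X.2

/-!
Writing `Δ_N(X_R)` as `det (q_{N-i}(x_{R,j}))` (monic polynomials of degrees `0, …, N-1` differ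
from the monomials by a unitriangular change of basis), and absorbing `∏ w_R(x_{R,j})` into its
columns, the integrand becomes a product of three determinants. Expanding all three by Leibniz,
each of the `(N!)³` terms, indexed by `ρ, τ, σ`, is a product of `N` functions of the disjoint
pairs `(x_{L,i}, x_{R,ρ(i)})`, so Fubini integrates it to `± ∏ᵢ M_{σ(i), τρ(i)}`, with `M` the
matrix of pairings. The sum over `σ` is `sign(τρ) det M`, which cancels the other two signs and
leaves `(N!)² det M`.
-/

open Equiv Polynomial

namespace Matrix

variable {ι R : Type*} [Fintype ι] [DecidableEq ι] [CommRing R]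

local notation "ε " σ:arg => ((Perm.sign σ : ℤ) : R)

theorem det_mul_det_mul_det_eq_sum (A B C : Matrix ι ι R) :
    A.det * B.det * C.det = ∑ ρ : Perm ι, ∑ τ : Perm ι, ∑ σ : Perm ι,
      ε ρ * ε τ * ε σ * ∏ i, A (σ i) i * B i (ρ i) * C (τ (ρ i)) (ρ i) := by
  rw [det_apply' A, ← det_transpose B, det_apply' Bᵀ, det_apply' C]
  simp only [sum_mul, mul_sum, transpose_apply, prod_mul_distrib]
  rw [sum_comm]
  refine sum_congr rfl fun ρ _ => sum_congr rfl fun τ _ => sum_congr rfl fun σ _ => ?_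
  rw [← Equiv.prod_comp ρ (fun i => C (τ i) i)]
  ring

theorem sum_sign_mul_prod_apply_perm (M : Matrix ι ι R) (π : Perm ι) :
    ∑ σ : Perm ι, ε σ * ∏ i, M (σ i) (π i) = ε π * M.det := by
  rw [← det_permute', det_apply']
  rfl

theorem sum_sign_mul_prod_apply_mul_perm (M : Matrix ι ι R) :
    ∑ ρ : Perm ι, ∑ τ : Perm ι, ∑ σ : Perm ι, ε ρ * ε τ * ε σ * ∏ i, M (σ i) (τ (ρ i))
      = (Fintype.card ι).factorial ^ 2 * M.det := by
  have h : ∀ ρ τ : Perm ι, ∑ σ : Perm ι, ε ρ * ε τ * ε σ * ∏ i, M (σ i) (τ (ρ i)) = M.det := by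
    intro ρ τ
    simp_rw [mul_assoc (ε ρ * ε τ), ← mul_sum]
    have hperm := sum_sign_mul_prod_apply_perm M (τ * ρ)
    simp only [Perm.coe_mul, Function.comp_apply] at hperm
    have hsq : ∀ π : Perm ι, ε π * ε π = 1 := fun π => by
      rw [← Int.cast_mul, ← Units.val_mul, Int.units_mul_self, Units.val_one, Int.cast_one]
    rw [hperm, Perm.sign_mul, Units.val_mul, Int.cast_mul]
    linear_combination (ε τ * ε τ * M.det) * hsq ρ + M.det * hsq τ
  simp only [h, sum_const, card_univ, Fintype.card_perm, nsmul_eq_mul]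
  ring

end Matrix

theorem Fin.prod_Ioi_rev {M : Type*} [CommMonoid M] {n : ℕ} (g : Fin n → Fin n → M) :
    ∏ i, ∏ j ∈ Ioi i, g (Fin.rev j) (Fin.rev i) = ∏ i, ∏ j ∈ Ioi i, g i j := by
  calc ∏ i, ∏ j ∈ Ioi i, g (Fin.rev j) (Fin.rev i)
      = ∏ i, ∏ j ∈ Iio (Fin.rev i), g j (Fin.rev i) := by
        simp_rw [← Fin.map_revPerm_Ioi, prod_map]; rfl
    _ = ∏ i, ∏ j ∈ Iio i, g j i := Fintype.prod_equiv Fin.revPerm _ _ fun _ => rfl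
    _ = ∏ i, ∏ j ∈ Ioi i, g i j := prod_comm' (by simp)

theorem Delta_eq_det_eval {N : ℕ} (q : ℕ → ℂ[X])
    (hq : ∀ k < N, (q k).Monic ∧ (q k).natDegree = k) (x : Fin N → ℝ) :
    Delta x = (of fun i j : Fin N => (q (N - 1 - i)).eval (x j : ℂ)).det := by
  set v : Fin N → ℂ := fun i => x i
  have hval : ∀ i : Fin N, N - 1 - (i : ℕ) = Fin.rev i := fun i => by simp [Fin.val_rev]; omega
  have hP : (of fun i j : Fin N => (q (N - 1 - i)).eval (v j))
      = (of fun i j : Fin N => (q j).eval (v i))ᵀ.submatrix Fin.revPerm id := by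
    ext i j; simp [hval]
  have hV : vandermonde (v ∘ Fin.rev) = (vandermonde v).submatrix Fin.revPerm id := rfl
  calc Delta x = (vandermonde (v ∘ Fin.rev)).det := by
        rw [det_vandermonde]; exact (Fin.prod_Ioi_rev fun i j => v i - v j).symm
    _ = _ := by
        rw [hV, hP, det_permute, det_permute, det_transpose,
          det_eval_matrixOfPolynomials_eq_det_vandermonde v (fun j => q j)
            (fun j => (hq j j.isLt).2) (fun j => (hq j j.isLt).1)]

namespace MeasureTheory

variable {ι α β 𝕜 : Type*} [Fintype ι] [MeasurableSpace α] [MeasurableSpace β]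
  {μ : Measure α} {ν : Measure β} [SigmaFinite μ] [SigmaFinite ν]

theorem exists_measurePreserving_pi_prod_perm (ρ : Perm ι) :
    ∃ e : (ι → α × β) ≃ᵐ (ι → α) × (ι → β),
      MeasurePreserving e (Measure.pi fun _ => μ.prod ν)
        ((Measure.pi fun _ => μ).prod (Measure.pi fun _ => ν)) ∧
      ∀ v i, (e v).1 i = (v i).1 ∧ (e v).2 (ρ i) = (v i).2 := by
  refine ⟨(MeasurableEquiv.arrowProdEquivProdArrow α β ι).trans
    ((MeasurableEquiv.refl _).prodCongr (MeasurableEquiv.piCongrLeft (fun _ => β) ρ)),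
    ((MeasurePreserving.id _).prod (measurePreserving_piCongrLeft (fun _ => ν) ρ)).comp
      (measurePreserving_arrowProdEquivProdArrow α β ι (fun _ => μ) (fun _ => ν)),
    fun v i => ⟨rfl, Equiv.piCongrLeft_apply_apply (fun _ => β) ρ (fun k => (v k).2) i⟩⟩

variable [RCLike 𝕜]

theorem integrable_prod_apply_perm (ρ : Perm ι) {g : ι → α × β → 𝕜}
    (hg : ∀ i, Integrable (g i) (μ.prod ν)) :
    Integrable (fun X : (ι → α) × (ι → β) => ∏ i, g i (X.1 i, X.2 (ρ i)))
      ((Measure.pi fun _ => μ).prod (Measure.pi fun _ => ν)) := by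
  obtain ⟨e, he, hev⟩ := exists_measurePreserving_pi_prod_perm (μ := μ) (ν := ν) ρ
  rw [← he.integrable_comp_emb e.measurableEmbedding]
  simpa [Function.comp_def, hev] using Integrable.fintype_prod hg

theorem integral_prod_apply_perm (ρ : Perm ι) (g : ι → α × β → 𝕜) :
    ∫ X : (ι → α) × (ι → β), ∏ i, g i (X.1 i, X.2 (ρ i))
        ∂(Measure.pi fun _ => μ).prod (Measure.pi fun _ => ν)
      = ∏ i, ∫ p, g i p ∂μ.prod ν := by
  obtain ⟨e, he, hev⟩ := exists_measurePreserving_pi_prod_perm (μ := μ) (ν := ν) ρ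
  rw [← he.integral_comp', ← integral_fintype_prod_eq_prod]
  simp [hev]

local notation "ε " σ:arg => ((Perm.sign σ : ℤ) : 𝕜)

theorem integral_det_mul_det_mul_det [DecidableEq ι] (φ : ι → α → 𝕜) (K : α → β → 𝕜)
    (ψ : ι → β → 𝕜)
    (h : ∀ i j, Integrable (fun p : α × β => φ i p.1 * K p.1 p.2 * ψ j p.2) (μ.prod ν)) :
    ∫ X : (ι → α) × (ι → β), (of fun i j => φ i (X.1 j)).det *
        (of fun i j => K (X.1 i) (X.2 j)).det * (of fun i j => ψ i (X.2 j)).det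
        ∂(Measure.pi fun _ => μ).prod (Measure.pi fun _ => ν)
      = (Fintype.card ι).factorial ^ 2 *
          (of fun i j => ∫ p, φ i p.1 * K p.1 p.2 * ψ j p.2 ∂μ.prod ν).det := by
  set G : ι → ι → α × β → 𝕜 := fun i j p => φ i p.1 * K p.1 p.2 * ψ j p.2
  have hterm : ∀ ρ τ σ : Perm ι, Integrable (fun X : (ι → α) × (ι → β) =>
      ε ρ * ε τ * ε σ * ∏ i, G (σ i) (τ (ρ i)) (X.1 i, X.2 (ρ i)))
      ((Measure.pi fun _ => μ).prod (Measure.pi fun _ => ν)) :=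
    fun ρ τ σ => (integrable_prod_apply_perm ρ fun i => h _ _).const_mul _
  calc _ = ∫ X : (ι → α) × (ι → β), ∑ ρ : Perm ι, ∑ τ : Perm ι, ∑ σ : Perm ι,
          ε ρ * ε τ * ε σ * ∏ i, G (σ i) (τ (ρ i)) (X.1 i, X.2 (ρ i))
          ∂(Measure.pi fun _ => μ).prod (Measure.pi fun _ => ν) := by
        simp_rw [det_mul_det_mul_det_eq_sum]; rfl
    _ = ∑ ρ : Perm ι, ∑ τ : Perm ι, ∑ σ : Perm ι,
          ε ρ * ε τ * ε σ * ∏ i, (of fun i j => ∫ p, G i j p ∂μ.prod ν) (σ i) (τ (ρ i)) := by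
        rw [integral_finsetSum _ fun ρ _ => integrable_finsetSum _ fun τ _ =>
          integrable_finsetSum _ fun σ _ => hterm ρ τ σ]
        refine sum_congr rfl fun ρ _ => ?_
        rw [integral_finsetSum _ fun τ _ => integrable_finsetSum _ fun σ _ => hterm ρ τ σ]
        refine sum_congr rfl fun τ _ => ?_
        rw [integral_finsetSum _ fun σ _ => hterm ρ τ σ]
        refine sum_congr rfl fun σ _ => ?_
        rw [integral_const_mul, integral_prod_apply_perm]
        rfl
    _ = _ := sum_sign_mul_prod_apply_mul_perm _

end MeasureTheory

theorem pairingRIntegrand_eq (wR : ℝ → ℂ) (ω : ℝ → ℝ → ℂ) (f g : ℝ → ℂ) :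
    pairingRIntegrand wR ω f g = fun p => f p.1 * ω p.1 p.2 * (wR p.2 * g p.2) := by
  funext p
  simp only [pairingRIntegrand]
  ring

theorem peIntegrand_eq_det_mul_det_mul_det (N : ℕ) (wR : ℝ → ℂ) (ω : ℝ → ℝ → ℂ)
    (f : ℕ → ℝ → ℂ) (q : ℕ → Polynomial ℂ) (hq : ∀ k < N, (q k).Monic ∧ (q k).natDegree = k)
    (X : (Fin N → ℝ) × (Fin N → ℝ)) :
    peIntegrand N wR ω f X = (of fun i j : Fin N => f (N - 1 - i) (X.1 j)).det *
      (of fun i j => ω (X.1 i) (X.2 j)).det *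
      (of fun i j : Fin N => wR (X.2 j) * (q (N - 1 - i)).eval (X.2 j : ℂ)).det := by
  have hweight := det_mul_row (fun j => wR (X.2 j))
    (of fun i j : Fin N => (q (N - 1 - i)).eval (X.2 j : ℂ))
  simp only [of_apply] at hweight
  rw [peIntegrand, Delta_eq_det_eval q hq, hweight]
  ring

theorem pe_partition_function_det_general (N : ℕ)
    (wR : ℝ → ℂ) (ω : ℝ → ℝ → ℂ)
    (f : ℕ → ℝ → ℂ)
    (q : ℕ → Polynomial ℂ)
    (hq : ∀ k < N, (q k).Monic ∧ (q k).natDegree = k)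
    (hpair : ∀ i < N, ∀ j < N, Integrable (pairingRIntegrand wR ω (f i)
      (fun y => (q j).eval (y : ℂ)))) :
    ((N.factorial : ℂ) ^ 2)⁻¹ * ∫ X : (Fin N → ℝ) × (Fin N → ℝ), peIntegrand N wR ω f X
      = (Matrix.of fun i j : Fin N =>
          pairingR wR ω (f (N - 1 - (i : ℕ)))
            (fun y => (q (N - 1 - (j : ℕ))).eval (y : ℂ))).det := by
  have hlt : ∀ i : Fin N, N - 1 - (i : ℕ) < N := fun i => by omega
  simp_rw [peIntegrand_eq_det_mul_det_mul_det N wR ω f q hq, Measure.volume_eq_prod, volume_pi]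
  rw [integral_det_mul_det_mul_det (fun i : Fin N => f (N - 1 - i)) ω
      (fun (j : Fin N) y => wR y * (q (N - 1 - j)).eval (y : ℂ)) fun i j => ?_, Fintype.card_fin]
  · rw [inv_mul_cancel_left₀ (pow_ne_zero 2 (Nat.cast_ne_zero.mpr N.factorial_ne_zero))]
    simp only [pairingR, pairingRIntegrand_eq, ← Measure.volume_eq_prod]
  · simpa only [pairingRIntegrand_eq, Measure.volume_eq_prod] using hpair _ (hlt i) _ (hlt j)

/-- **Coupled polynomial ensemble partition function as a determinant.** For measurable
functions `f_{L,0},…,f_{L,N−1}` and monic polynomials `q_0,…,q_{N−1}` with `deg q_k = k`,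
assuming all integrals are absolutely convergent,
`Z_{N,f_L} = det( ⟨f_{L,N−i}|ω|q_{N−j}⟩_R )`. -/
theorem pe_partition_function_det (N : ℕ) (hN : 1 ≤ N)
    (wR : ℝ → ℂ) (ω : ℝ → ℝ → ℂ)
    (hwR : Measurable wR) (hω : Measurable (Function.uncurry ω))
    (f : ℕ → ℝ → ℂ) (hf : ∀ k < N, Measurable (f k))
    (q : ℕ → Polynomial ℂ)
    (hq : ∀ k < N, (q k).Monic ∧ (q k).natDegree = k)
    (hZ : Integrable (peIntegrand N wR ω f))
    (hpair : ∀ i < N, ∀ j < N, Integrable (pairingRIntegrand wR ω (f i)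
      (fun y => (q j).eval (y : ℂ)))) :
    ((N.factorial : ℂ) ^ 2)⁻¹ * ∫ X : (Fin N → ℝ) × (Fin N → ℝ), peIntegrand N wR ω f X
      = (Matrix.of fun i j : Fin N =>
          pairingR wR ω (f (N - 1 - (i : ℕ)))
            (fun y => (q (N - 1 - (j : ℕ))).eval (y : ℂ))).det :=
  pe_partition_function_det_general N wR ω f q hq hpair
end
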